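/- arXiv:2006.10527 — 5 statements merged into one kernel-verified Lean document; each statement's English description precedes it below -/
import Mathlib

section
/- Let C be a noncatastrophic (n,k) convolutional code with parity-check matrix H(z) = Σ_{i=0}^ν H_i z^i, and let H_j^c be the lower block-triangular matrix with blocks (H_j^c)_{r,s} = H_{r−s} (with H_i = 0 for i > ν or i < 0), for 0 ≤ s ≤ r ≤ j. If d_j^c(C) = d, then none of the first n columns of H_j^c lies in the span of any other d−2 columns of H_j^c. -/
open Polynomial Matrix

/-- The `j`-th column distance of a convolutional code `C ⊆ F[z]^n`. -/
noncomputable def colDist {F : Type*} [Field F] [DecidableEq F] {n : ℕ}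
    (C : Submodule (Polynomial F) (Fin n → Polynomial F)) (j : ℕ) : ℕ :=
  sInf { d : ℕ | ∃ v ∈ C, (fun b => (v b).coeff 0) ≠ (0 : Fin n → F) ∧
    d = ∑ t ∈ Finset.range (j + 1), hammingNorm (fun b => (v b).coeff t) }

/-- Left primeness of a polynomial matrix `H ∈ F[z]^{m×n}`: any factorization `H = Y * B`
with `Y` square forces `Y` to be unimodular. -/
def LeftPrime {F : Type*} [Field F] {m n : ℕ}
    (H : Matrix (Fin m) (Fin n) (Polynomial F)) : Prop :=
  ∀ (Y : Matrix (Fin m) (Fin m) (Polynomial F))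
    (B : Matrix (Fin m) (Fin n) (Polynomial F)), H = Y * B → IsUnit Y

/-- The truncated sliding parity-check matrix `H_j^c`: the block lower-triangular matrix over
`F` whose `((r,a),(s,b))` entry is the coefficient `(H_{r-s})_{a,b}` of `H(z)` (and `0` for
`s > r`). -/
noncomputable def slideH {F : Type*} [Field F] {m n : ℕ}
    (H : Matrix (Fin m) (Fin n) (Polynomial F)) (j : ℕ) :
    Matrix (Fin (j + 1) × Fin m) (Fin (j + 1) × Fin n) F :=
  fun p q => if (q.1 : ℕ) ≤ (p.1 : ℕ) then (H p.2 q.2).coeff ((p.1 : ℕ) - (q.1 : ℕ)) else 0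

/-!
A dependency among the columns of `H_j^c` in which column `(0, b)` occurs is a kernel vector
`w = (v_0, …, v_j)` with `v_0 ≠ 0`. The polynomial vector `v(z) = Σ v_t z^t` then satisfies
`H(z) v(z) ≡ 0 mod z^{j+1}`, say `H(z) v(z) = z^{j+1} u(z)`. Left primeness makes `H(z)`
surjective onto `F[z]^m`, so `u = H x` for some `x`, and `v - z^{j+1} x` is a codeword with the
same first `j + 1` coefficients. Its truncated weight is at most `|S| + 1`, which must be at
least `d`.
-/

theorem exists_sum_smul_eq_zero_of_mem_span_image {K M κ : Type*} [Ring K] [Nontrivial K]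
    [DecidableEq K] [AddCommGroup M] [Module K M] [Fintype κ] [DecidableEq κ] {v : κ → M}
    {q : κ} {S : Finset κ} (hqS : q ∉ S) (hq : v q ∈ Submodule.span K (v '' S)) :
    ∃ w : κ → K, ∑ k, w k • v k = 0 ∧ w q ≠ 0 ∧ hammingNorm w ≤ S.card + 1 := by
  obtain ⟨l, hlS, hl⟩ := (Finsupp.mem_span_image_iff_linearCombination K).1 hq
  have hlS' : ∀ k ∉ S, l k = 0 := fun k hk => Finsupp.notMem_support_iff.1 fun h => hk (hlS h)
  rw [Finsupp.linearCombination_apply, Finsupp.sum_fintype _ _ (by simp)] at hl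
  refine ⟨⇑l - Pi.single q 1, ?_, by simp [hlS' q hqS], ?_⟩
  · simp [sub_smul, Finset.sum_sub_distrib, hl]
  · calc hammingNorm (⇑l - Pi.single q 1) ≤ (insert q S).card := by
          refine Finset.card_le_card fun k hk => ?_
          rw [Finset.mem_insert]
          by_contra! hkqS
          simp [hlS' k hkqS.2, hkqS.1] at hk
      _ ≤ S.card + 1 := Finset.card_insert_le _ _

theorem hammingNorm_prod_eq_sum {ι κ β : Type*} [Fintype ι] [Fintype κ] [Zero β]
    [DecidableEq β] (w : ι × κ → β) :
    hammingNorm w = ∑ i, hammingNorm fun k => w (i, k) := by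
  simp only [hammingNorm, Finset.card_filter, Fintype.sum_prod_type]

theorem Submodule.exists_fin_span_range_eq_top {R : Type*} [CommRing R] [IsDomain R]
    [IsPrincipalIdealRing R] {m : ℕ} (M : Submodule R (Fin m → R)) :
    ∃ g : Fin m → M, Submodule.span R (Set.range g) = ⊤ := by
  obtain ⟨r, b⟩ := M.basisOfPid (Pi.basisFun R (Fin m))
  have hrm : r ≤ m := by
    have := M.finrank_le
    rwa [Module.finrank_eq_card_basis b, Fintype.card_fin, Module.finrank_fin_fun] at this
  refine ⟨Function.extend (Fin.castLE hrm) b 0, eq_top_iff.2 ?_⟩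
  rw [← b.span_eq]
  refine Submodule.span_mono ?_
  rintro _ ⟨i, rfl⟩
  exact ⟨Fin.castLE hrm i, (Fin.castLE_injective hrm).extend_apply _ _ _⟩

theorem LeftPrime.mulVec_surjective {F : Type*} [Field F] {m n : ℕ}
    {H : Matrix (Fin m) (Fin n) F[X]} (hH : LeftPrime H) : Function.Surjective H.mulVec := by
  -- Factor `H = Y B` with the columns of `Y` generating the column module of `H`; then `Y` is
  -- a unit, so the range of `H`, which contains that of `Y`, is everything.
  obtain ⟨g, hg⟩ := (LinearMap.range H.mulVecLin).exists_fin_span_range_eq_top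
  have hcol : ∀ q, ∃ c : Fin m → F[X],
      ∑ i, c i • g i = ⟨Hᵀ q, Pi.single q 1, mulVec_single_one H q⟩ := fun q =>
    (Submodule.mem_span_range_iff_exists_fun F[X]).1 (hg ▸ Submodule.mem_top)
  choose c hc using hcol
  let Y : Matrix (Fin m) (Fin m) F[X] := (Matrix.of fun i => (g i : Fin m → F[X]))ᵀ
  have hYB : H = Y * (Matrix.of c)ᵀ := by
    refine Matrix.ext fun a q => ?_
    have := congrFun (congrArg Subtype.val (hc q)) a
    simp only [Submodule.coe_sum, Submodule.coe_smul, Finset.sum_apply, Pi.smul_apply,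
      smul_eq_mul] at this
    simpa [Y, Matrix.mul_apply, mul_comm] using this.symm
  obtain ⟨Z, hZ⟩ := (hH Y _ hYB).exists_right_inv
  intro u
  have hu : Y *ᵥ (Z *ᵥ u) ∈ LinearMap.range H.mulVecLin := by
    simp only [Matrix.mulVec_eq_sum, op_smul_eq_smul]
    exact Submodule.sum_mem _ fun i _ => Submodule.smul_mem _ _ (g i).2
  rw [mulVec_mulVec, hZ, one_mulVec] at hu
  exact hu

section SlidingMatrix

variable {F : Type*} [Field F] {m n j : ℕ}

noncomputable def polyVecOfBlocks (w : Fin (j + 1) × Fin n → F) : Fin n → F[X] :=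
  fun b => ∑ t : Fin (j + 1), C (w (t, b)) * X ^ (t : ℕ)

theorem coeff_polyVecOfBlocks (w : Fin (j + 1) × Fin n → F) (t : Fin (j + 1)) (b : Fin n) :
    (polyVecOfBlocks w b).coeff t = w (t, b) := by
  simp [polyVecOfBlocks, coeff_X_pow, Fin.val_inj]

theorem coeff_mulVec_polyVecOfBlocks (H : Matrix (Fin m) (Fin n) F[X])
    (w : Fin (j + 1) × Fin n → F) (r : Fin (j + 1)) (a : Fin m) :
    ((H *ᵥ polyVecOfBlocks w) a).coeff r = (slideH H j *ᵥ w) (r, a) := by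
  simp only [mulVec, dotProduct, polyVecOfBlocks, Finset.mul_sum, finsetSum_coeff,
    Fintype.sum_prod_type]
  rw [Finset.sum_comm]
  refine Finset.sum_congr rfl fun t _ => Finset.sum_congr rfl fun b _ => ?_
  rw [show H a b * (C (w (t, b)) * X ^ (t : ℕ)) = C (w (t, b)) * (X ^ (t : ℕ) * H a b) by ring,
    coeff_C_mul, coeff_X_pow_mul', slideH]
  split_ifs <;> simp [mul_comm]

theorem exists_mem_ker_coeff_eq_of_slideH_mulVec_eq_zero {H : Matrix (Fin m) (Fin n) F[X]}
    (hH : Function.Surjective H.mulVec) {w : Fin (j + 1) × Fin n → F}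
    (hw : slideH H j *ᵥ w = 0) :
    ∃ v ∈ LinearMap.ker H.mulVecLin, ∀ (t : Fin (j + 1)) b, (v b).coeff t = w (t, b) := by
  have hdvd : ∀ a, (X : F[X]) ^ (j + 1) ∣ (H *ᵥ polyVecOfBlocks w) a := fun a =>
    X_pow_dvd_iff.2 fun r hr => by simpa [hw] using coeff_mulVec_polyVecOfBlocks H w ⟨r, hr⟩ a
  choose u hu using hdvd
  obtain ⟨x, hx⟩ := hH u
  refine ⟨polyVecOfBlocks w - (X : F[X]) ^ (j + 1) • x, ?_, fun t b => ?_⟩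
  · rw [LinearMap.mem_ker, mulVecLin_apply, mulVec_sub, mulVec_smul, hx]
    ext a : 1
    simp [hu a]
  · simp [coeff_X_pow_mul', coeff_polyVecOfBlocks]
    omega

theorem colDist_ker_le_hammingNorm [DecidableEq F] {H : Matrix (Fin m) (Fin n) F[X]}
    (hH : Function.Surjective H.mulVec) {w : Fin (j + 1) × Fin n → F}
    (hw : slideH H j *ᵥ w = 0) {b : Fin n} (hb : w (0, b) ≠ 0) :
    colDist (LinearMap.ker H.mulVecLin) j ≤ hammingNorm w := by
  obtain ⟨v, hv, hvw⟩ := exists_mem_ker_coeff_eq_of_slideH_mulVec_eq_zero hH hw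
  refine Nat.sInf_le ⟨v, hv, fun h => hb ?_, ?_⟩
  · rw [← hvw 0 b]
    simpa using congrFun h b
  · rw [hammingNorm_prod_eq_sum, ← Fin.sum_univ_eq_sum_range]
    simp only [hvw]

end SlidingMatrix

theorem first_columns_not_in_span_general {F : Type*} [Field F] [DecidableEq F] {m n j d : ℕ}
    (H : Matrix (Fin m) (Fin n) (Polynomial F))
    (hlp : LeftPrime H)
    (hd : colDist (LinearMap.ker H.mulVecLin) j = d) :
    ∀ b : Fin n, ∀ S : Finset (Fin (j + 1) × Fin n),
      S.card + 2 ≤ d → ((0 : Fin (j + 1)), b) ∉ S →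
      (fun p => slideH H j p ((0 : Fin (j + 1)), b)) ∉
        Submodule.span F ((fun q => fun p => slideH H j p q) '' (S : Set (Fin (j + 1) × Fin n))) := by
  intro b S hcard hbS hspan
  obtain ⟨w, hw, hwb, hwS⟩ := exists_sum_smul_eq_zero_of_mem_span_image hbS hspan
  have hslide : slideH H j *ᵥ w = 0 := by
    simp only [mulVec_eq_sum, op_smul_eq_smul]
    exact hw
  have := colDist_ker_le_hammingNorm hlp.mulVec_surjective hslide hwb
  omega

/-- Let `C = Ker H(z)` be a noncatastrophic `(n,k)` convolutional code with
left prime, full row rank parity-check matrix `H(z) = ∑_{i=0}^ν H_i z^i`. If the `j`-th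
column distance of `C` equals `d`, then none of the first `n` columns of `H_j^c` lies in
the span of any other `d − 2` columns of `H_j^c`. -/
theorem first_columns_not_in_span {F : Type*} [Field F] [DecidableEq F] {m n ν j d : ℕ}
    (H : Matrix (Fin m) (Fin n) (Polynomial F))
    (hdeg : ∀ a b, (H a b).natDegree ≤ ν)
    (hfrr : Function.Injective fun x : Fin m → Polynomial F => Matrix.vecMul x H)
    (hlp : LeftPrime H)
    (hd : colDist (LinearMap.ker H.mulVecLin) j = d) :
    ∀ b : Fin n, ∀ S : Finset (Fin (j + 1) × Fin n),
      S.card + 2 ≤ d → ((0 : Fin (j + 1)), b) ∉ S →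
      (fun p => slideH H j p ((0 : Fin (j + 1)), b)) ∉
        Submodule.span F ((fun q => fun p => slideH H j p q) '' (S : Set (Fin (j + 1) × Fin n))) :=
  first_columns_not_in_span_general H hlp hd
end

section
/- Let G(z) ∈ F[z]^{n×k} be a full column rank polynomial matrix, written G(z) = G̃(z)X(z) where G̃(z) ∈ F[z]^{n×k} is right prime and X(z) ∈ F[z]^{k×k} is nonsingular. Then the code C̃ = Im_{F[z]} G̃(z) is the smallest noncatastrophic convolutional code containing C = Im_{F[z]} G(z): that is, C ⊆ C̃, C̃ is noncatastrophic, and any noncatastrophic (n,k) convolutional code containing C also contains C̃. -/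
open Polynomial Matrix

/-- Right primeness of a polynomial matrix. -/
def RightPrime {F : Type*} [Field F] {n k : ℕ}
    (G : Matrix (Fin n) (Fin k) (Polynomial F)) : Prop :=
  ∀ (B : Matrix (Fin n) (Fin k) (Polynomial F))
    (X : Matrix (Fin k) (Fin k) (Polynomial F)), G = B * X → IsUnit X

/-- A submodule `D ⊆ F[z]^n` is a noncatastrophic `(n,κ)` convolutional code for some `κ`
if it admits a full column rank right prime generator matrix. -/
def IsNoncatCode {F : Type*} [Field F] {n : ℕ}
    (D : Submodule (Polynomial F) (Fin n → Polynomial F)) : Prop :=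
  ∃ (κ : ℕ) (G : Matrix (Fin n) (Fin κ) (Polynomial F)),
    Function.Injective G.mulVecLin ∧ LinearMap.range G.mulVecLin = D ∧ RightPrime G

/-!
The image of a full column rank right prime matrix `H` is saturated: if `d • v ∈ Im H` with
`d ≠ 0`, then `Im H + ⟨v⟩` is squeezed between `Im H` and `d⁻¹ • Im H`, so it is free of the
same rank; its basis matrix `B` satisfies `H = B Y`, and right primeness makes `Y` unimodular,
whence `v ∈ Im B = Im H`. Since `det X • Im G̃ ⊆ Im G` by the adjugate formula, every
noncatastrophic code containing `Im G` contains `Im G̃`.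
-/

theorem Matrix.exists_eq_mul_of_range_mulVecLin_le {R : Type*} [CommSemiring R]
    {m n p : Type*} [Fintype n] [Fintype p] [DecidableEq p]
    (A : Matrix m p R) (B : Matrix m n R)
    (h : LinearMap.range A.mulVecLin ≤ LinearMap.range B.mulVecLin) :
    ∃ X : Matrix n p R, A = B * X := by
  choose w hw using fun j => h ⟨Pi.single j 1, rfl⟩
  refine ⟨(Matrix.of w)ᵀ, Matrix.ext fun i j => ?_⟩
  have hj : B *ᵥ w j = A.col j := by simpa [Matrix.mulVec_single_one] using hw j
  rw [← Matrix.col_apply A j i, ← hj]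
  simp only [Matrix.mulVec, dotProduct, Matrix.mul_apply, Matrix.transpose_apply,
    Matrix.of_apply]

theorem Submodule.finrank_eq_of_le_of_smul_le {R M : Type*} [CommRing R] [IsDomain R]
    [IsNoetherianRing R] [AddCommGroup M] [Module R M] [Module.Finite R M]
    [Module.IsTorsionFree R M] {N N' : Submodule R M} (hle : N ≤ N') {d : R} (hd : d ≠ 0)
    (hsmul : ∀ x ∈ N', d • x ∈ N) :
    Module.finrank R N = Module.finrank R N' := by
  refine le_antisymm (Submodule.finrank_mono hle) ?_
  let φ : N' →ₗ[R] N := ((d • LinearMap.id).comp N'.subtype).codRestrict N fun x => hsmul x x.2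
  exact LinearMap.finrank_le_finrank_of_injective (f := φ) fun x y hxy =>
    Subtype.ext (smul_right_injective M hd (congrArg Subtype.val hxy))

section RightPrime

variable {F : Type*} [Field F] {n κ : ℕ} {H : Matrix (Fin n) (Fin κ) F[X]}

theorem RightPrime.range_mulVecLin_le (hp : RightPrime H) (B : Matrix (Fin n) (Fin κ) F[X])
    (h : LinearMap.range H.mulVecLin ≤ LinearMap.range B.mulVecLin) :
    LinearMap.range B.mulVecLin ≤ LinearMap.range H.mulVecLin := by
  obtain ⟨Y, hY⟩ := H.exists_eq_mul_of_range_mulVecLin_le B h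
  obtain ⟨u, rfl⟩ := hp B Y hY
  have hB : B = H * (↑u⁻¹ : Matrix (Fin κ) (Fin κ) F[X]) := by
    rw [hY, Matrix.mul_assoc, Units.mul_inv, Matrix.mul_one]
  rw [hB, Matrix.mulVecLin_mul]
  exact LinearMap.range_comp_le_range _ _

theorem RightPrime.mem_range_of_smul_mem_range (hp : RightPrime H)
    (hinj : Function.Injective H.mulVecLin) {d : F[X]} (hd : d ≠ 0) {v : Fin n → F[X]}
    (hv : d • v ∈ LinearMap.range H.mulVecLin) :
    v ∈ LinearMap.range H.mulVecLin := by
  set D := LinearMap.range H.mulVecLin ⊔ Submodule.span F[X] {v}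
  have hsmul : ∀ x ∈ D, d • x ∈ LinearMap.range H.mulVecLin := by
    intro x hx
    obtain ⟨y, hy, z, hz, rfl⟩ := Submodule.mem_sup.mp hx
    obtain ⟨c, rfl⟩ := Submodule.mem_span_singleton.mp hz
    rw [smul_add, smul_comm]
    exact add_mem (Submodule.smul_mem _ d hy) (Submodule.smul_mem _ c hv)
  have hrank : Module.finrank F[X] D = κ := by
    rw [← Submodule.finrank_eq_of_le_of_smul_le le_sup_left hd hsmul,
      LinearMap.finrank_range_of_inj hinj, Module.finrank_fin_fun]
  let b := Module.finBasisOfFinrankEq F[X] D hrank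
  let B : Matrix (Fin n) (Fin κ) F[X] := (Matrix.of fun j => (b j : Fin n → F[X]))ᵀ
  have hB : LinearMap.range B.mulVecLin = D := by
    rw [Matrix.range_mulVecLin]
    have hcol : Set.range B.col = D.subtype '' Set.range b := by
      rw [← Set.range_comp]
      rfl
    rw [hcol, ← Submodule.map_span, b.span_eq, Submodule.map_top, Submodule.range_subtype]
  have hD : D ≤ LinearMap.range H.mulVecLin :=
    hB ▸ hp.range_mulVecLin_le B (hB ▸ le_sup_left)
  exact hD (Submodule.mem_sup_right (Submodule.mem_span_singleton_self v))

end RightPrime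

theorem IsNoncatCode.mem_of_smul_mem {F : Type*} [Field F] {n : ℕ}
    {D : Submodule F[X] (Fin n → F[X])} (hD : IsNoncatCode D) {d : F[X]} (hd : d ≠ 0)
    {v : Fin n → F[X]} (hv : d • v ∈ D) : v ∈ D := by
  obtain ⟨κ, H, hinj, rfl, hp⟩ := hD
  exact hp.mem_range_of_smul_mem_range hinj hd hv

theorem smallest_noncatastrophic_code_general {F : Type*} [Field F] {n k : ℕ}
    (G Gt : Matrix (Fin n) (Fin k) (Polynomial F))
    (X : Matrix (Fin k) (Fin k) (Polynomial F))
    (hGt : Function.Injective Gt.mulVecLin)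
    (hprime : RightPrime Gt)
    (hX : X.det ≠ 0)
    (hfac : G = Gt * X) :
    LinearMap.range G.mulVecLin ≤ LinearMap.range Gt.mulVecLin ∧
    IsNoncatCode (LinearMap.range Gt.mulVecLin) ∧
    (∀ D : Submodule (Polynomial F) (Fin n → Polynomial F), IsNoncatCode D →
      LinearMap.range G.mulVecLin ≤ D → LinearMap.range Gt.mulVecLin ≤ D) := by
  refine ⟨?_, ⟨k, Gt, hGt, rfl, hprime⟩, fun D hD hle => ?_⟩
  · rw [hfac, Matrix.mulVecLin_mul]
    exact LinearMap.range_comp_le_range _ _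
  · rintro _ ⟨w, rfl⟩
    have hdet : X.det • Gt *ᵥ w = G *ᵥ (X.adjugate *ᵥ w) := by
      rw [hfac, Matrix.mulVec_mulVec, Matrix.mul_assoc, Matrix.mul_adjugate, Matrix.mul_smul,
        Matrix.mul_one, Matrix.smul_mulVec]
    exact hD.mem_of_smul_mem hX (hdet ▸ hle ⟨X.adjugate *ᵥ w, rfl⟩)

/-- If `G = G̃ * X` with `G̃` right prime (full column rank) and `X`
nonsingular, then `C̃ = Im G̃` is the smallest noncatastrophic convolutional code
containing `C = Im G`: `C ⊆ C̃`, `C̃` is noncatastrophic, and every noncatastrophic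
convolutional code containing `C` contains `C̃`. -/
theorem smallest_noncatastrophic_code {F : Type*} [Field F] {n k : ℕ}
    (G Gt : Matrix (Fin n) (Fin k) (Polynomial F))
    (X : Matrix (Fin k) (Fin k) (Polynomial F))
    (hG : Function.Injective G.mulVecLin)
    (hGt : Function.Injective Gt.mulVecLin)
    (hprime : RightPrime Gt)
    (hX : X.det ≠ 0)
    (hfac : G = Gt * X) :
    LinearMap.range G.mulVecLin ≤ LinearMap.range Gt.mulVecLin ∧
    IsNoncatCode (LinearMap.range Gt.mulVecLin) ∧
    (∀ D : Submodule (Polynomial F) (Fin n → Polynomial F), IsNoncatCode D →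
      LinearMap.range G.mulVecLin ≤ D → LinearMap.range Gt.mulVecLin ≤ D) :=
  smallest_noncatastrophic_code_general G Gt X hGt hprime hX hfac
end

section
/- Let C be an (n,k) noncatastrophic convolutional code with j-th column distance d. If in a sliding window of coefficient vectors v_t, ..., v_{t+j} at most d−1 components are erased and all preceding symbols v_0, ..., v_{t−1} are correctly known, then the erased components of v_t can be uniquely recovered. -/
open Polynomial Matrix

/-!
The difference `u = v - w` of two such codewords is a codeword whose first `t` coefficients
vanish, so `u = X ^ t • q` with `q` again in `Ker H`, and `q` is `u` shifted back by `t`.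
If `u_t = q_0 ≠ 0`, then `q` competes in the definition of the `j`-th column distance, while
its nonzero coefficients in the window `0, …, j` all lie in the erasure pattern `E`; hence
`d ≤ |E| < d`.
-/

theorem sum_hammingNorm_le_card {ι κ R : Type*} [Fintype ι] [Fintype κ] [Zero R]
    [DecidableEq R] (f : ι → κ → R) (E : Finset (ι × κ))
    (hE : ∀ i k, f i k ≠ 0 → (i, k) ∈ E) :
    ∑ i, hammingNorm (f i) ≤ E.card := by
  calc ∑ i, hammingNorm (f i) = (Finset.univ.filter fun p : ι × κ => f p.1 p.2 ≠ 0).card := by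
        simp only [hammingNorm, Finset.card_filter, Fintype.sum_prod_type]
    _ ≤ E.card := Finset.card_le_card fun p hp => hE p.1 p.2 (Finset.mem_filter.mp hp).2

theorem colDist_le_card_of_coeff_support_subset {F : Type*} [Field F] [DecidableEq F] {n j : ℕ}
    {C : Submodule F[X] (Fin n → F[X])} {v : Fin n → F[X]} (hv : v ∈ C)
    (hv0 : (fun b => (v b).coeff 0) ≠ 0) (E : Finset (Fin (j + 1) × Fin n))
    (hE : ∀ (s : Fin (j + 1)) b, (v b).coeff s ≠ 0 → (s, b) ∈ E) :
    colDist C j ≤ E.card :=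
  calc colDist C j ≤ ∑ s ∈ Finset.range (j + 1), hammingNorm (fun b => (v b).coeff s) :=
        Nat.sInf_le ⟨v, hv, hv0, rfl⟩
    _ = ∑ s : Fin (j + 1), hammingNorm (fun b => (v b).coeff s) :=
        (Fin.sum_univ_eq_sum_range (fun s => hammingNorm (fun b => (v b).coeff s)) _).symm
    _ ≤ E.card := sum_hammingNorm_le_card _ E hE

theorem exists_mulVec_eq_zero_shift_of_coeff_lt_eq_zero {F : Type*} [Field F] {m n t : ℕ}
    (H : Matrix (Fin m) (Fin n) F[X]) {u : Fin n → F[X]} (hu : H *ᵥ u = 0)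
    (hlow : ∀ b, ∀ s < t, (u b).coeff s = 0) :
    ∃ q : Fin n → F[X], H *ᵥ q = 0 ∧ ∀ b s, (q b).coeff s = (u b).coeff (t + s) := by
  choose q hq using fun b => X_pow_dvd_iff.mpr (hlow b)
  have hu_eq : u = (X ^ t : F[X]) • q := funext hq
  refine ⟨q, ?_, fun b s => by rw [hq b, add_comm t s, coeff_X_pow_mul]⟩
  rw [hu_eq, mulVec_smul, smul_eq_zero] at hu
  exact hu.resolve_left (pow_ne_zero _ X_ne_zero)

theorem window_recovery_of_first_block_general {F : Type*} [Field F] [DecidableEq F] {m n j t d : ℕ}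
    (H : Matrix (Fin m) (Fin n) (Polynomial F))
    (hd : colDist (LinearMap.ker H.mulVecLin) j = d)
    (E : Finset (Fin (j + 1) × Fin n))
    (hcard : E.card + 1 ≤ d) :
    ∀ v w : Fin n → Polynomial F, H.mulVec v = 0 → H.mulVec w = 0 →
      (∀ b : Fin n, ∀ s : ℕ, s < t → (v b).coeff s = (w b).coeff s) →
      (∀ s : Fin (j + 1), ∀ b : Fin n, (s, b) ∉ E →
        (v b).coeff (t + s) = (w b).coeff (t + s)) →
      ∀ b : Fin n, (v b).coeff t = (w b).coeff t := by
  intro v w hv hw hpast hwin b₀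
  by_contra hb₀
  obtain ⟨q, hq, hq_coeff⟩ := exists_mulVec_eq_zero_shift_of_coeff_lt_eq_zero H
    (u := v - w) (by rw [mulVec_sub, hv, hw, sub_zero])
    (fun b s hs => by rw [Pi.sub_apply, coeff_sub, hpast b s hs, sub_self])
  have hq0 : (fun b => (q b).coeff 0) ≠ 0 := fun h => hb₀ <| by
    simpa [hq_coeff, sub_eq_zero] using congrFun h b₀
  have hqE : ∀ (s : Fin (j + 1)) b, (q b).coeff s ≠ 0 → (s, b) ∈ E := fun s b hs => by
    by_contra hsE
    simp [hq_coeff, hwin s b hsE] at hs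
  have hdE := colDist_le_card_of_coeff_support_subset (C := LinearMap.ker H.mulVecLin) hq hq0 E hqE
  omega

/-- Let `C = Ker H(z)` be a noncatastrophic convolutional code with `j`-th
column distance `d`. If in the sliding window of coefficients `v_t, …, v_{t+j}` at most
`d − 1` components are erased (erasure positions `E`, `|E| ≤ d − 1`) and all preceding
symbols `v_0, …, v_{t−1}` are correctly known, then the erased components of `v_t` are
uniquely recovered: any two such codewords have the same coefficient `v_t`. -/
theorem window_recovery_of_first_block {F : Type*} [Field F] [DecidableEq F] {m n ν j t d : ℕ}
    (H : Matrix (Fin m) (Fin n) (Polynomial F))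
    (hdeg : ∀ a b, (H a b).natDegree ≤ ν)
    (hfrr : Function.Injective fun x : Fin m → Polynomial F => Matrix.vecMul x H)
    (hlp : LeftPrime H)
    (hd : colDist (LinearMap.ker H.mulVecLin) j = d)
    (E : Finset (Fin (j + 1) × Fin n))
    (hcard : E.card + 1 ≤ d) :
    ∀ v w : Fin n → Polynomial F, H.mulVec v = 0 → H.mulVec w = 0 →
      (∀ b : Fin n, ∀ s : ℕ, s < t → (v b).coeff s = (w b).coeff s) →
      (∀ s : Fin (j + 1), ∀ b : Fin n, (s, b) ∉ E →
        (v b).coeff (t + s) = (w b).coeff (t + s)) →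
      ∀ b : Fin n, (v b).coeff t = (w b).coeff t :=
  window_recovery_of_first_block_general H hd E hcard
end

section
/- Let C be an (n,k,δ) MDP convolutional code and L = ⌊δ/k⌋ + ⌊δ/(n−k)⌋. If in every sliding window of length (L+1)n at most (L+1)(n−k) symbols are erased, then full recovery of all erasures from left to right is possible. -/
/-!
Subtract the two codewords: `u = v - w` is a codeword supported on the erasures. Since `G` is
right prime, its constant term `G(0)` is injective, so `X ∣ G x` forces `X ∣ x`; hence if `u ≠ 0`
starts at time `i₀` then `u = X ^ i₀ • u'` for a codeword `u'` with `u'(0) ≠ 0`. The first `L + 1`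
coefficient vectors of `u'` lie in the window of erasures starting at `i₀`, so their weight is at
most `(L + 1)(n - k)`, below the column distance `d_L^c = (n - k)(L + 1) + 1`.
-/

open Polynomial Matrix

lemma hammingNorm_le_card_of_eq_zero {ι : Type*} [Fintype ι] {β : ι → Type*}
    [∀ i, Zero (β i)] [∀ i, DecidableEq (β i)] {x : ∀ i, β i} {s : Finset ι}
    (hx : ∀ i ∉ s, x i = 0) : hammingNorm x ≤ s.card :=
  Finset.card_le_card fun i hi => by
    by_contra his
    exact (Finset.mem_filter.mp hi).2 (hx i his)

lemma colDist_le_of_mem {F : Type*} [Field F] [DecidableEq F] {n : ℕ}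
    {C : Submodule F[X] (Fin n → F[X])} {v : Fin n → F[X]} (hv : v ∈ C)
    (hv0 : (fun b => (v b).coeff 0) ≠ 0) (j : ℕ) :
    colDist C j ≤ ∑ t ∈ Finset.range (j + 1), hammingNorm fun b => (v b).coeff t :=
  Nat.sInf_le ⟨v, hv, hv0, rfl⟩

lemma det_one_updateCol {R : Type*} [CommRing R] {ι : Type*} [Fintype ι] [DecidableEq ι]
    (j : ι) (c : ι → R) : ((1 : Matrix ι ι R).updateCol j c).det = c j := by
  simpa [Matrix.one_apply] using det_updateCol_sum (1 : Matrix ι ι R) j c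

namespace RightPrime

variable {F : Type*} [Field F] {n k : ℕ} {G : Matrix (Fin n) (Fin k) F[X]}

/-- If `G(0) c = 0` with `c j ≠ 0`, then replacing the `j`-th column of `1` by `c` gives a
unimodular `Y` such that `X` divides the `j`-th column of `G * Y`, i.e. `G * Y = B * D` with
`D = diag(1, …, X, …, 1)`; so `G = B * (D * Y⁻¹)` with a non-unimodular right factor. -/
theorem eq_zero_of_constantCoeff_mulVec_eq_zero (hG : RightPrime G) {c : Fin k → F}
    (hc : G.map constantCoeff *ᵥ c = 0) : c = 0 := by
  by_contra hc0
  obtain ⟨j, hj⟩ := Function.ne_iff.mp hc0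
  set Y : Matrix (Fin k) (Fin k) F[X] := (1 : Matrix (Fin k) (Fin k) F[X]).updateCol j (C ∘ c)
  have hY : IsUnit Y.det := by simpa [Y, det_one_updateCol] using hj
  have hcol : ∀ b, ((G * Y) b j).coeff 0 = 0 := fun b => by
    simpa [Y, Matrix.mul_apply, updateCol_apply, mulVec, dotProduct, Matrix.one_apply,
      finsetSum_coeff] using congrFun hc b
  set D : Matrix (Fin k) (Fin k) F[X] := diagonal (Function.update 1 j X)
  set B : Matrix (Fin n) (Fin k) F[X] := (G * Y).updateCol j fun b => divX ((G * Y) b j)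
  have hGY : G * Y = B * D := by
    refine Matrix.ext fun b i => ?_
    rcases eq_or_ne i j with rfl | hij
    · simpa [B, D, hcol] using (divX_mul_X_add ((G * Y) b i)).symm
    · simp [B, D, hij]
  have hDY : IsUnit (D * Y⁻¹) := hG B _ <| by
    rw [← Matrix.mul_assoc, ← hGY, Matrix.mul_assoc, mul_nonsing_inv _ hY, Matrix.mul_one]
  have hD : IsUnit D.det :=
    isUnit_of_mul_isUnit_left (by simpa [det_mul] using hDY.map detMonoidHom)
  exact not_isUnit_X (by simpa [D, det_diagonal, Finset.prod_update_of_mem] using hD)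

theorem X_dvd_of_X_dvd_mulVec (hG : RightPrime G) {x : Fin k → F[X]}
    (hx : ∀ b, X ∣ (G *ᵥ x) b) (i : Fin k) : X ∣ x i := by
  have h0 : G.map constantCoeff *ᵥ (constantCoeff ∘ x) = 0 := funext fun b => by
    rw [← RingHom.map_mulVec, constantCoeff_apply, Pi.zero_apply, ← X_dvd_iff]
    exact hx b
  rw [X_dvd_iff, ← constantCoeff_apply]
  exact congrFun (hG.eq_zero_of_constantCoeff_mulVec_eq_zero h0) i

theorem X_pow_dvd_of_X_pow_dvd_mulVec (hG : RightPrime G) (m : ℕ) {x : Fin k → F[X]}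
    (hx : ∀ b, X ^ m ∣ (G *ᵥ x) b) (i : Fin k) : X ^ m ∣ x i := by
  induction m generalizing x with
  | zero => exact one_dvd _
  | succ m ih =>
    choose y hy using hG.X_dvd_of_X_dvd_mulVec (x := x) fun b =>
      (dvd_pow_self X m.succ_ne_zero).trans (hx b)
    have hxy : x = (X : F[X]) • y := funext hy
    have hGy : ∀ b, X ^ m ∣ (G *ᵥ y) b := fun b => by
      have := hx b
      rwa [hxy, mulVec_smul, Pi.smul_apply, smul_eq_mul, pow_succ', mul_dvd_mul_iff_left X_ne_zero]
        at this
    rw [hy i, pow_succ']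
    exact mul_dvd_mul_left X (ih hGy)

theorem exists_eq_X_pow_smul (hG : RightPrime G) {u : Fin n → F[X]}
    (hu : u ∈ LinearMap.range G.mulVecLin) (hu0 : u ≠ 0) :
    ∃ i₀, ∃ u' ∈ LinearMap.range G.mulVecLin,
      (fun b => (u' b).coeff 0) ≠ 0 ∧ u = (X : F[X]) ^ i₀ • u' := by
  classical
  obtain ⟨x, rfl⟩ := hu
  have hex : ∃ i, (fun b => ((G *ᵥ x) b).coeff i) ≠ 0 := by
    obtain ⟨b, hb⟩ := Function.ne_iff.mp hu0
    obtain ⟨i, hi⟩ : ∃ i, ((G *ᵥ x) b).coeff i ≠ 0 := by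
      by_contra! h
      exact hb (Polynomial.ext h)
    exact ⟨i, Function.ne_iff.mpr ⟨b, hi⟩⟩
  obtain ⟨i₀, hi₀, hlow⟩ : ∃ i₀, (fun b => ((G *ᵥ x) b).coeff i₀) ≠ 0 ∧
      ∀ t < i₀, ∀ b, ((G *ᵥ x) b).coeff t = 0 :=
    ⟨Nat.find hex, Nat.find_spec hex, fun t ht => congrFun (not_not.mp (Nat.find_min hex ht))⟩
  choose x' hx' using hG.X_pow_dvd_of_X_pow_dvd_mulVec i₀ fun b =>
    X_pow_dvd_iff.mpr fun t ht => hlow t ht b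
  have hu : G *ᵥ x = (X : F[X]) ^ i₀ • G *ᵥ x' := by
    rw [← mulVec_smul]
    exact congrArg _ (funext hx')
  refine ⟨i₀, G *ᵥ x', ⟨x', rfl⟩, fun h => hi₀ (funext fun b => ?_), hu⟩
  rw [Pi.zero_apply, hu, Pi.smul_apply, smul_eq_mul, coeff_X_pow_mul', if_pos le_rfl, Nat.sub_self]
  exact congrFun h b

end RightPrime

theorem mdp_full_recovery_general {F : Type*} [Field F] [DecidableEq F] {n k L : ℕ}
    (G : Matrix (Fin n) (Fin k) (Polynomial F))
    (hprime : RightPrime G)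
    (hMDP : ∀ j ≤ L, colDist (LinearMap.range G.mulVecLin) j = (n - k) * (j + 1) + 1)
    (E : ℕ → Finset (Fin n))
    (hwin : ∀ i : ℕ, (∑ l ∈ Finset.range (L + 1), (E (i + l)).card) ≤ (L + 1) * (n - k)) :
    ∀ v ∈ LinearMap.range G.mulVecLin, ∀ w ∈ LinearMap.range G.mulVecLin,
      (∀ (i : ℕ) (b : Fin n), b ∉ E i → (v b).coeff i = (w b).coeff i) → v = w := by
  intro v hv w hw hagree
  by_contra hne
  obtain ⟨i₀, u', hu', hu'0, hvw⟩ :=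
    hprime.exists_eq_X_pow_smul (sub_mem hv hw) (sub_ne_zero.mpr hne)
  have herased : ∀ t, ∀ b ∉ E (i₀ + t), (u' b).coeff t = 0 := fun t b hb => by
    have := congrArg (fun u => (u b).coeff (i₀ + t)) hvw
    simpa [hagree _ b hb, coeff_X_pow_mul'] using this.symm
  have hweight : ∑ t ∈ Finset.range (L + 1), hammingNorm (fun b => (u' b).coeff t)
      ≤ (L + 1) * (n - k) :=
    (Finset.sum_le_sum fun t _ => hammingNorm_le_card_of_eq_zero (herased t)).trans (hwin i₀)
  have := (colDist_le_of_mem hu' hu'0 L).trans hweight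
  rw [hMDP L le_rfl] at this
  lia

/-- Let `C = Im G` be an `(n,k,δ)` MDP convolutional code (noncatastrophic,
`d_j^c = (n−k)(j+1)+1` for `j ≤ L`, `L = ⌊δ/k⌋ + ⌊δ/(n−k)⌋`, `δ` the maximal degree of the
full-size minors of `G`). If in every sliding window of `L+1` consecutive coefficient
vectors (i.e. `(L+1)n` symbols) at most `(L+1)(n−k)` symbols are erased, then full
recovery of all erasures from left to right is possible: any two codewords agreeing on
all non-erased positions are equal. -/
theorem mdp_full_recovery {F : Type*} [Field F] [DecidableEq F] {n k δ L : ℕ}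
    (hk0 : 0 < k) (hk : k < n)
    (G : Matrix (Fin n) (Fin k) (Polynomial F))
    (hG : Function.Injective G.mulVecLin)
    (hprime : RightPrime G)
    (hδ : (Finset.univ.sup fun r : Fin k ↪ Fin n => ((G.submatrix r id).det).natDegree) = δ)
    (hL : L = δ / k + δ / (n - k))
    (hMDP : ∀ j ≤ L, colDist (LinearMap.range G.mulVecLin) j = (n - k) * (j + 1) + 1)
    (E : ℕ → Finset (Fin n))
    (hwin : ∀ i : ℕ, (∑ l ∈ Finset.range (L + 1), (E (i + l)).card) ≤ (L + 1) * (n - k)) :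
    ∀ v ∈ LinearMap.range G.mulVecLin, ∀ w ∈ LinearMap.range G.mulVecLin,
      (∀ (i : ℕ) (b : Fin n), b ∉ E i → (v b).coeff i = (w b).coeff i) → v = w :=
  mdp_full_recovery_general G hprime hMDP E hwin
end

section
/- Suppose G₀^{(2)}(z₂) and G₀^{(1)}(z₁) generate an (n,k,δ₁) and an (n,k,δ₂) MDP convolutional code respectively, with L₁ = ⌊δ₁/k⌋ + ⌊δ₁/(n−k)⌋ and L₂ = ⌊δ₂/k⌋ + ⌊δ₂/(n−k)⌋. If in a square region of size (L₁+1)n × (L₂+1)n of a 2D codeword (with no erasures outside the square) there are at most (L₁+L₂+2)(n−k) − (n−1) erasures, then the 2D decoding algorithm (alternately decoding rows and columns with the two MDP codes) corrects all erasures regardless of their location. -/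
open Polynomial Matrix

/-!
Write `v - w = G x` with `x ≠ 0` and factor out the largest power of `z₁` dividing `x`. The lowest
nonvanishing `z₁`-row of `v - w` is then `G₀^{(2)} x₀` with `x₀ ≠ 0`, a nonzero codeword of the MDP
code generated by `G₀^{(2)}`; since `G₀^{(2)}` is right prime, its constant term `G₀^{(2)}(0)` is
injective, so after a shift this codeword has nonzero constant term and at least
`(L₂+1)(n−k)+1` nonzero symbols. Swapping the variables, some `z₂`-column of `v - w` has at least
`(L₁+1)(n−k)+1`. All of them are erasures, and a row and a column share at most `n` positions.
-/

theorem RightPrime.map_constantCoeff_mulVec_ne_zero {F : Type*} [Field F] {n k : ℕ}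
    {G : Matrix (Fin n) (Fin k) F[X]} (hG : RightPrime G) {x : Fin k → F} (hx : x ≠ 0) :
    G.map constantCoeff *ᵥ x ≠ 0 := by
  intro hGx
  obtain ⟨c₀, hc₀⟩ := Function.ne_iff.mp hx
  set P : Matrix (Fin k) (Fin k) F[X] := ((1 : Matrix (Fin k) (Fin k) F).updateCol c₀ x).map C
  have hPdet : IsUnit P.det := by
    simp only [P]
    rw [← RingHom.mapMatrix_apply, ← RingHom.map_det, ← cramer_apply, cramer_one]
    exact isUnit_C.mpr (isUnit_iff_ne_zero.mpr hc₀)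
  -- Column `c₀` of `G * P` is `G *ᵥ x`, which vanishes at `0`, so it is divisible by `X`:
  -- `G * P` factors through `diag(1, …, X, …, 1)`, against right primeness.
  have hcol : ∀ a, X * ((G * P) a c₀).divX = (G * P) a c₀ := by
    intro a
    have h0 : ((G * P) a c₀).coeff 0 = 0 := by
      have : (G * P) a c₀ = (G *ᵥ (C ∘ x)) a := by
        simp [P, mul_apply, mulVec, dotProduct, updateCol_self]
      rw [← constantCoeff_apply, this, RingHom.map_mulVec]
      simpa [Function.comp_def] using congrFun hGx a
    have := X_mul_divX_add ((G * P) a c₀)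
    rwa [h0, map_zero, add_zero] at this
  set D : Matrix (Fin k) (Fin k) F[X] := diagonal (Function.update 1 c₀ X)
  have hBD : G = ((G * P).updateCol c₀ fun a => ((G * P) a c₀).divX) * (D * P⁻¹) := by
    have : ((G * P).updateCol c₀ fun a => ((G * P) a c₀).divX) * D = G * P := by
      ext a c
      by_cases hc : c = c₀
      · subst hc; simp [D, mul_diagonal, mul_comm, hcol]
      · simp [D, mul_diagonal, hc]
    rw [← Matrix.mul_assoc, this, Matrix.mul_assoc, mul_nonsing_inv _ hPdet, Matrix.mul_one]
  have hu := hG _ _ hBD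
  rw [isUnit_iff_isUnit_det, det_mul] at hu
  have hD : D.det = X := by simp [D, det_diagonal, Finset.prod_update_of_mem]
  exact not_isUnit_X (hD ▸ isUnit_of_mul_isUnit_left hu)

section CoeffSupport

variable {R ι : Type*} [Semiring R] [Fintype ι] [DecidableEq ι]

def coeffSupport (v : ι → R[X]) : Finset (ℕ × ι) :=
  Finset.univ.biUnion fun b => (v b).support ×ˢ {b}

@[simp]
theorem mem_coeffSupport {v : ι → R[X]} {p : ℕ × ι} :
    p ∈ coeffSupport v ↔ (v p.2).coeff p.1 ≠ 0 := by
  obtain ⟨t, b⟩ := p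
  simp [coeffSupport]

theorem card_coeffSupport_le_X_pow_smul (m : ℕ) (v : ι → R[X]) :
    (coeffSupport v).card ≤ (coeffSupport ((X : R[X]) ^ m • v)).card :=
  Finset.card_le_card_of_injOn (fun p => (p.1 + m, p.2))
    (fun p hp => by simpa [coeff_X_pow_mul] using hp)
    (fun p _ q _ h => by simpa [Prod.ext_iff] using h)

theorem sum_hammingNorm_coeff_le_card_coeffSupport [DecidableEq R] (v : ι → R[X])
    (T : Finset ℕ) :
    ∑ t ∈ T, hammingNorm (fun b => (v b).coeff t) ≤ (coeffSupport v).card := by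
  calc ∑ t ∈ T, hammingNorm (fun b => (v b).coeff t)
      = ∑ t ∈ T, ((coeffSupport v).filter fun p => p.1 = t).card := by
        refine Finset.sum_congr rfl fun t _ => ?_
        refine Finset.card_nbij' (fun b => (t, b)) Prod.snd ?_ ?_ ?_ ?_ <;> intro p <;> aesop
    _ = ((coeffSupport v).filter fun p => p.1 ∈ T).card :=
        Finset.sum_card_fiberwise_eq_card_filter _ _ _
    _ ≤ (coeffSupport v).card := Finset.card_filter_le _ _

end CoeffSupport

theorem exists_eq_X_pow_smul_of_ne_zero {R ι : Type*} [Semiring R] {v : ι → R[X]}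
    (hv : v ≠ 0) :
    ∃ (m : ℕ) (v' : ι → R[X]), v = (X : R[X]) ^ m • v' ∧ constantCoeff ∘ v' ≠ 0 := by
  have hS : {t : ℕ | ∃ b, (v b).coeff t ≠ 0}.Nonempty := by
    obtain ⟨b, hb⟩ : ∃ b, v b ≠ 0 := Function.ne_iff.mp hv
    exact ⟨(v b).natDegree, b, leadingCoeff_ne_zero.mpr hb⟩
  set m := sInf {t : ℕ | ∃ b, (v b).coeff t ≠ 0}
  have hdvd : ∀ b, X ^ m ∣ v b := fun b => X_pow_dvd_iff.mpr fun t ht =>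
    by_contra fun h => Nat.notMem_of_lt_sInf ht ⟨b, h⟩
  choose v' hv' using hdvd
  refine ⟨m, v', funext hv', fun h => ?_⟩
  obtain ⟨b, hb⟩ := Nat.sInf_mem hS
  have := coeff_X_pow_mul (v' b) m 0
  rw [zero_add, ← hv' b] at this
  exact hb (this.trans (by simpa using congrFun h b))

theorem RightPrime.colDist_le_card_coeffSupport {F : Type*} [Field F] [DecidableEq F]
    {n k : ℕ} {G : Matrix (Fin n) (Fin k) F[X]} (hG : RightPrime G) (L : ℕ)
    {y : Fin k → F[X]} (hy : y ≠ 0) :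
    colDist (LinearMap.range G.mulVecLin) L ≤ (coeffSupport (G *ᵥ y)).card := by
  obtain ⟨m, y', rfl, hy'⟩ := exists_eq_X_pow_smul_of_ne_zero hy
  have hconst : (fun b => ((G *ᵥ y') b).coeff 0) ≠ 0 := by
    convert hG.map_constantCoeff_mulVec_ne_zero hy' using 1
    ext b
    exact RingHom.map_mulVec constantCoeff G y' b
  calc colDist (LinearMap.range G.mulVecLin) L
      ≤ ∑ t ∈ Finset.range (L + 1), hammingNorm (fun b => ((G *ᵥ y') b).coeff t) :=
        Nat.sInf_le ⟨G *ᵥ y', ⟨y', rfl⟩, hconst, rfl⟩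
    _ ≤ (coeffSupport (G *ᵥ y')).card := sum_hammingNorm_coeff_le_card_coeffSupport _ _
    _ ≤ (coeffSupport (G *ᵥ ((X : F[X]) ^ m • y'))).card := by
        rw [mulVec_smul]
        exact card_coeffSupport_le_X_pow_smul m _

theorem Polynomial.Bivariate.coeff_coeff_swap {R : Type*} [CommSemiring R] (p : R[X][X])
    (i j : ℕ) : ((swap p).coeff i).coeff j = (p.coeff j).coeff i := by
  induction p using Polynomial.induction_on' with
  | add p q hp hq => simp [hp, hq]
  | monomial m a =>
    induction a using Polynomial.induction_on' with
    | add a b ha hb => simp_all [map_add]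
    | monomial l r =>
      simp only [swap_monomial_monomial, coeff_monomial]
      split_ifs <;> simp [coeff_monomial, *]

theorem Polynomial.Bivariate.constantCoeff_swap {R : Type*} [CommSemiring R] (p : R[X][X]) :
    constantCoeff (swap p) = p.map constantCoeff := by
  ext i
  simp [coeff_coeff_swap]

theorem RightPrime.exists_colDist_le_card_coeffSupport_coeff {F : Type*} [Field F]
    [DecidableEq F] {n k : ℕ} {G : Matrix (Fin n) (Fin k) F[X][X]}
    (hG : RightPrime (G.map constantCoeff)) (L : ℕ) {x : Fin k → F[X][X]} (hx : x ≠ 0) :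
    ∃ q, colDist (LinearMap.range (G.map constantCoeff).mulVecLin) L ≤
      (coeffSupport fun b => ((G *ᵥ x) b).coeff q).card := by
  obtain ⟨m, x', rfl, hx'⟩ := exists_eq_X_pow_smul_of_ne_zero hx
  refine ⟨m, (hG.colDist_le_card_coeffSupport L hx').trans_eq
    (congrArg (fun v => (coeffSupport v).card) (funext fun b => ?_))⟩
  rw [← RingHom.map_mulVec, mulVec_smul, Pi.smul_apply, smul_eq_mul, coeff_X_pow_mul',
    if_pos le_rfl, Nat.sub_self, constantCoeff_apply]

theorem RightPrime.exists_colDist_le_card_coeffSupport_swap_coeff {F : Type*} [Field F]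
    [DecidableEq F] {n k : ℕ} {G : Matrix (Fin n) (Fin k) F[X][X]}
    (hG : RightPrime (G.map (Polynomial.map constantCoeff))) (L : ℕ) {x : Fin k → F[X][X]}
    (hx : x ≠ 0) :
    ∃ j, colDist (LinearMap.range (G.map (Polynomial.map constantCoeff)).mulVecLin) L ≤
      (coeffSupport fun b => (Bivariate.swap ((G *ᵥ x) b)).coeff j).card := by
  have hswap :
      (G.map Bivariate.swap).map constantCoeff = G.map (Polynomial.map constantCoeff) := by
    ext a c : 1
    exact Bivariate.constantCoeff_swap (G a c)
  rw [← hswap] at hG ⊢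
  have hmap (b) : Bivariate.swap ((G *ᵥ x) b) = (G.map Bivariate.swap *ᵥ Bivariate.swap ∘ x) b :=
    RingHom.map_mulVec (Bivariate.swap (R := F) : F[X][X] →+* F[X][X]) G x b
  simp only [hmap]
  refine hG.exists_colDist_le_card_coeffSupport_coeff L fun h => hx (funext fun c => ?_)
  simpa using congrFun h c

theorem card_add_card_le_of_mem_row_of_mem_col {ι : Type*} [Fintype ι] [DecidableEq ι]
    (E : Finset (ℕ × ℕ × ι)) (q j : ℕ) (R C : Finset (ℕ × ι))
    (hR : ∀ p ∈ R, (q, p.1, p.2) ∈ E) (hC : ∀ p ∈ C, (p.1, j, p.2) ∈ E) :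
    R.card + C.card ≤ E.card + Fintype.card ι := by
  set R' := R.image fun p => (q, p.1, p.2)
  set C' := C.image fun p => (p.1, j, p.2)
  have hR' : R'.card = R.card := Finset.card_image_of_injective _ fun p p' h => by
    simpa [Prod.ext_iff] using h
  have hC' : C'.card = C.card := Finset.card_image_of_injective _ fun p p' h => by
    simpa [Prod.ext_iff] using h
  have hunion : (R' ∪ C').card ≤ E.card := Finset.card_le_card <| Finset.union_subset
    (Finset.image_subset_iff.mpr hR) (Finset.image_subset_iff.mpr hC)
  have hinter : (R' ∩ C').card ≤ Fintype.card ι := by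
    refine (Finset.card_le_card_of_injOn (fun e => e.2.2) (fun _ _ => Finset.mem_univ _) ?_).trans
      Finset.card_univ.le
    intro e he e' he' h
    simp only [R', C', Finset.coe_inter, Set.mem_inter_iff, Finset.coe_image, Set.mem_image]
      at he he'
    grind
  have := Finset.card_union_add_card_inter R' C'
  omega

theorem twoD_square_erasure_correction_general {F : Type*} [Field F] [DecidableEq F]
    {n k L₁ L₂ : ℕ}
    (G : Matrix (Fin n) (Fin k) (Polynomial (Polynomial F)))
    -- `G₀^{(1)}(z₁)`: the coefficient of `z₂^0`, a polynomial matrix in `z₁`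
    (G01 : Matrix (Fin n) (Fin k) (Polynomial F))
    (hG01 : G01 = fun a c => (G a c).map Polynomial.constantCoeff)
    -- `G₀^{(2)}(z₂)`: the coefficient of `z₁^0`, a polynomial matrix in `z₂`
    (G02 : Matrix (Fin n) (Fin k) (Polynomial F))
    (hG02 : G02 = fun a c => (G a c).coeff 0)
    (hG01prime : RightPrime G01) (hG02prime : RightPrime G02)
    (hMDP1 : ∀ j ≤ L₁, colDist (LinearMap.range G01.mulVecLin) j = (n - k) * (j + 1) + 1)
    (hMDP2 : ∀ j ≤ L₂, colDist (LinearMap.range G02.mulVecLin) j = (n - k) * (j + 1) + 1)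
    (E : Finset (ℕ × ℕ × Fin n))
    (hcard : E.card + (n - 1) ≤ (L₁ + L₂ + 2) * (n - k)) :
    ∀ v ∈ LinearMap.range G.mulVecLin, ∀ w ∈ LinearMap.range G.mulVecLin,
      (∀ (i j : ℕ) (b : Fin n), (i, j, b) ∉ E →
        ((v b).coeff i).coeff j = ((w b).coeff i).coeff j) → v = w := by
  rintro _ ⟨xv, rfl⟩ _ ⟨xw, rfl⟩ hagree
  by_contra hne
  have hx : xv - xw ≠ 0 := sub_ne_zero.mpr fun h => hne (h ▸ rfl)
  have hE : ∀ i j b, (((G *ᵥ (xv - xw)) b).coeff i).coeff j ≠ 0 → (i, j, b) ∈ E := by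
    intro i j b h
    by_contra hb
    have := hagree i j b hb
    simp_all [mulVec_sub]
  subst hG01 hG02
  obtain ⟨q, hrow⟩ := hG02prime.exists_colDist_le_card_coeffSupport_coeff L₂ hx
  obtain ⟨j, hcol⟩ := hG01prime.exists_colDist_le_card_coeffSupport_swap_coeff L₁ hx
  have hcross := card_add_card_le_of_mem_row_of_mem_col E q j
    (coeffSupport fun b => ((G *ᵥ (xv - xw)) b).coeff q)
    (coeffSupport fun b => (Bivariate.swap ((G *ᵥ (xv - xw)) b)).coeff j)
    (fun p hp => hE _ _ _ (mem_coeffSupport.mp hp))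
    (fun p hp => hE _ _ _ (by simpa [Bivariate.coeff_coeff_swap] using hp))
  have hrow' := (hMDP2 L₂ le_rfl).symm.le.trans hrow
  have hcol' := (hMDP1 L₁ le_rfl).symm.le.trans hcol
  rw [Fintype.card_fin] at hcross
  have : (L₁ + L₂ + 2) * (n - k) = (n - k) * (L₂ + 1) + (n - k) * (L₁ + 1) := by ring
  omega

/-- Let `C = Im G(z₁,z₂)` be a 2D convolutional code (bivariate polynomials
modelled as `F[z₂][z₁]`), such that `G₀^{(1)}(z₁) = ∑_i G_{i0} z₁^i` and
`G₀^{(2)}(z₂) = ∑_j G_{0j} z₂^j` generate an `(n,k,δ₁)` and an `(n,k,δ₂)` MDP (noncatastrophic)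
convolutional code, respectively, and set `Lᵢ = ⌊δᵢ/k⌋ + ⌊δᵢ/(n−k)⌋`. If all erasures lie in
a square region of `(L₁+1) × (L₂+1)` coefficient vectors (i.e. `(L₁+1)n × (L₂+1)n` symbols,
with no erasures outside it) and their number is at most `(L₁+L₂+2)(n−k) − (n−1)`, then all
erasures are corrected regardless of their location: any two codewords agreeing on all
non-erased coefficient components are equal. -/
theorem twoD_square_erasure_correction {F : Type*} [Field F] [DecidableEq F]
    {n k δ₁ δ₂ L₁ L₂ : ℕ} (hk0 : 0 < k) (hk : k < n)
    (G : Matrix (Fin n) (Fin k) (Polynomial (Polynomial F)))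
    (hG : Function.Injective G.mulVecLin)
    -- `G₀^{(1)}(z₁)`: the coefficient of `z₂^0`, a polynomial matrix in `z₁`
    (G01 : Matrix (Fin n) (Fin k) (Polynomial F))
    (hG01 : G01 = fun a c => (G a c).map Polynomial.constantCoeff)
    -- `G₀^{(2)}(z₂)`: the coefficient of `z₁^0`, a polynomial matrix in `z₂`
    (G02 : Matrix (Fin n) (Fin k) (Polynomial F))
    (hG02 : G02 = fun a c => (G a c).coeff 0)
    (hG01inj : Function.Injective G01.mulVecLin)
    (hG02inj : Function.Injective G02.mulVecLin)
    (hG01prime : RightPrime G01) (hG02prime : RightPrime G02)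
    (hδ₁ : (Finset.univ.sup fun r : Fin k ↪ Fin n => ((G01.submatrix r id).det).natDegree) = δ₁)
    (hδ₂ : (Finset.univ.sup fun r : Fin k ↪ Fin n => ((G02.submatrix r id).det).natDegree) = δ₂)
    (hL₁ : L₁ = δ₁ / k + δ₁ / (n - k))
    (hL₂ : L₂ = δ₂ / k + δ₂ / (n - k))
    (hMDP1 : ∀ j ≤ L₁, colDist (LinearMap.range G01.mulVecLin) j = (n - k) * (j + 1) + 1)
    (hMDP2 : ∀ j ≤ L₂, colDist (LinearMap.range G02.mulVecLin) j = (n - k) * (j + 1) + 1)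
    (E : Finset (ℕ × ℕ × Fin n)) (i₀ j₀ : ℕ)
    (hsquare : ∀ e ∈ E, i₀ ≤ e.1 ∧ e.1 ≤ i₀ + L₁ ∧ j₀ ≤ e.2.1 ∧ e.2.1 ≤ j₀ + L₂)
    (hcard : E.card + (n - 1) ≤ (L₁ + L₂ + 2) * (n - k)) :
    ∀ v ∈ LinearMap.range G.mulVecLin, ∀ w ∈ LinearMap.range G.mulVecLin,
      (∀ (i j : ℕ) (b : Fin n), (i, j, b) ∉ E →
        ((v b).coeff i).coeff j = ((w b).coeff i).coeff j) → v = w :=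
  twoD_square_erasure_correction_general G G01 hG01 G02 hG02 hG01prime hG02prime hMDP1 hMDP2 E hcard
end
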